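/- Upper bound for the θ-intermediate dimension of the sequence F_p: for p > 0, θ ∈ (0,1], and any s > θ/(p+θ), for every ε > 0 and every δ₀ > 0 there exists 0 < δ ≤ δ₀ and a cover {U_i} of F_p = {0} ∪ {k^{-p} : k ≥ 1} with δ ≤ |U_i| ≤ δ^θ for all i and Σ|U_i|^s ≤ ε. Hence the upper θ-intermediate dimension of F_p is at most θ/(p+θ). -/

import Mathlib

open Set

noncomputable section

/-- There is a countable cover of `F` by sets whose diameters all lie between `lo` and `hi`,
with `s`-power diameter sum at most `ε`. -/
def ICov {X : Type} [PseudoEMetricSpace X] (F : Set X) (s lo hi ε : ℝ) : Prop :=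
  ∃ (ι : Type) (_ : Countable ι) (U : ι → Set X), F ⊆ ⋃ i, U i ∧
    (∀ i, ENNReal.ofReal lo ≤ EMetric.diam (U i) ∧ EMetric.diam (U i) ≤ ENNReal.ofReal hi) ∧
    ∑' i, EMetric.diam (U i) ^ s ≤ ENNReal.ofReal ε

/-- There is a countable cover of `F` with no diameter restrictions and
`s`-power diameter sum at most `ε`. -/
def HCov {X : Type} [PseudoEMetricSpace X] (F : Set X) (s ε : ℝ) : Prop :=
  ∃ (ι : Type) (_ : Countable ι) (U : ι → Set X), F ⊆ ⋃ i, U i ∧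
    ∑' i, EMetric.diam (U i) ^ s ≤ ENNReal.ofReal ε

/-- The lower `θ`-intermediate dimension. -/
def lowerIDim {X : Type} [PseudoEMetricSpace X] (F : Set X) (θ : ℝ) : ℝ :=
  if θ = 0 then sInf {s : ℝ | 0 ≤ s ∧ ∀ ε > 0, HCov F s ε}
  else sInf {s : ℝ | 0 ≤ s ∧ ∀ ε > 0, ∀ δ₀ > 0, ∃ δ : ℝ, 0 < δ ∧ δ ≤ δ₀ ∧
    ICov F s (δ ^ (1 / θ)) δ ε}

/-- The upper `θ`-intermediate dimension. -/
def upperIDim {X : Type} [PseudoEMetricSpace X] (F : Set X) (θ : ℝ) : ℝ :=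
  if θ = 0 then sInf {s : ℝ | 0 ≤ s ∧ ∀ ε > 0, HCov F s ε}
  else sInf {s : ℝ | 0 ≤ s ∧ ∀ ε > 0, ∃ δ₀ > (0:ℝ), ∀ δ : ℝ, 0 < δ → δ ≤ δ₀ →
    ICov F s (δ ^ (1 / θ)) δ ε}

/-- A countable cover of `F` by sets all of diameter exactly `δ`,
with `s`-power diameter sum at most `ε`. -/
def EqCov {X : Type} [PseudoEMetricSpace X] (F : Set X) (s δ ε : ℝ) : Prop :=
  ∃ (ι : Type) (_ : Countable ι) (U : ι → Set X), F ⊆ ⋃ i, U i ∧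
    (∀ i, EMetric.diam (U i) = ENNReal.ofReal δ) ∧
    ∑' i, EMetric.diam (U i) ^ s ≤ ENNReal.ofReal ε

/-- The lower box dimension. -/
def lowerBoxDim {X : Type} [PseudoEMetricSpace X] (F : Set X) : ℝ :=
  sInf {s : ℝ | 0 ≤ s ∧ ∀ ε > 0, ∀ δ₀ > 0, ∃ δ : ℝ, 0 < δ ∧ δ ≤ δ₀ ∧ EqCov F s δ ε}

/-- The upper box dimension. -/
def upperBoxDim {X : Type} [PseudoEMetricSpace X] (F : Set X) : ℝ :=
  sInf {s : ℝ | 0 ≤ s ∧ ∀ ε > 0, ∃ δ₀ > (0:ℝ), ∀ δ : ℝ, 0 < δ → δ ≤ δ₀ → EqCov F s δ ε}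

/-- The Assouad dimension. -/
def assouadDim {X : Type} [PseudoEMetricSpace X] (F : Set X) : ℝ :=
  sInf {s : ℝ | 0 ≤ s ∧ ∃ C > (0:ℝ), ∀ x ∈ F, ∀ r R : ℝ, 0 < r → r < R →
    ∃ t : Finset (Set X), (F ∩ EMetric.closedBall x (ENNReal.ofReal R) ⊆ ⋃ U ∈ t, U) ∧
      (∀ U ∈ t, EMetric.diam U ≤ ENNReal.ofReal r) ∧ (t.card : ℝ) ≤ C * (R / r) ^ s}

end

/-- The set `{0} ∪ {k ^ (-p) : k ∈ ℕ, k ≥ 1}`. -/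
noncomputable def Fp (p : ℝ) : Set ℝ :=
  insert 0 {x : ℝ | ∃ k : ℕ, 1 ≤ k ∧ x = (k : ℝ) ^ (-p)}

/-!
Fix `0 < δ ≤ 1` and an exponent `γ`, and put `M = ⌈δ^(-γ)⌉`. The first `M` points `k^(-p)` are
covered by intervals of length `δ`, and the tail `[0, M^(-p))` by about `M^(-p) / δ^θ ≤ δ^(γp - θ)`
intervals of length `δ^θ`. The `s`-cost is then of order `δ^(s - γ) + δ^(γp - θ + θs)`, and the
choice `γ = (s + θ(1 - s)) / (p + 1)` makes both exponents equal to `(s(p + θ) - θ) / (p + 1)`,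
which is positive exactly when `s > θ / (p + θ)`.
-/

open Set Filter Topology

theorem ICov.mono {X : Type} [PseudoEMetricSpace X] {F : Set X} {s lo hi ε ε' : ℝ}
    (h : ICov F s lo hi ε) (hε : ε ≤ ε') : ICov F s lo hi ε' := by
  obtain ⟨ι, hι, U, hF, hdiam, hsum⟩ := h
  exact ⟨ι, hι, U, hF, hdiam, hsum.trans (ENNReal.ofReal_le_ofReal hε)⟩

theorem ediam_Icc_add (x a : ℝ) : Metric.ediam (Icc x (x + a)) = ENNReal.ofReal a := by
  rw [Real.ediam_Icc, add_sub_cancel_left]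

theorem icov_of_subset_two_scales {F : Set ℝ} {M N : ℕ} (x : Fin M → ℝ) (y : Fin N → ℝ)
    {a b s lo hi ε : ℝ} (ha : 0 < a) (hb : 0 < b)
    (hF : F ⊆ (⋃ k, Icc (x k) (x k + a)) ∪ ⋃ j, Icc (y j) (y j + b))
    (hloa : lo ≤ a) (hahi : a ≤ hi) (hlob : lo ≤ b) (hbhi : b ≤ hi)
    (hsum : M * a ^ s + N * b ^ s ≤ ε) : ICov F s lo hi ε := by
  refine ⟨Fin M ⊕ Fin N, inferInstance,
    Sum.elim (fun k => Icc (x k) (x k + a)) (fun j => Icc (y j) (y j + b)), ?_, ?_, ?_⟩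
  · refine hF.trans (union_subset ?_ ?_) <;> intro z hz <;> obtain ⟨i, hi⟩ := mem_iUnion.1 hz
    exacts [mem_iUnion.2 ⟨Sum.inl i, hi⟩, mem_iUnion.2 ⟨Sum.inr i, hi⟩]
  · rintro (k | j)
    · exact ⟨(ENNReal.ofReal_le_ofReal hloa).trans_eq (ediam_Icc_add _ _).symm,
        (ediam_Icc_add _ _).trans_le (ENNReal.ofReal_le_ofReal hahi)⟩
    · exact ⟨(ENNReal.ofReal_le_ofReal hlob).trans_eq (ediam_Icc_add _ _).symm,
        (ediam_Icc_add _ _).trans_le (ENNReal.ofReal_le_ofReal hbhi)⟩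
  · calc ∑' i, Metric.ediam (Sum.elim (fun k => Icc (x k) (x k + a))
            (fun j => Icc (y j) (y j + b)) i) ^ s
          = ENNReal.ofReal (M * a ^ s + N * b ^ s) := by
            simp only [tsum_fintype, Fintype.sum_sum_type, Sum.elim_inl, Sum.elim_inr,
              ediam_Icc_add, ENNReal.ofReal_rpow_of_pos ha, ENNReal.ofReal_rpow_of_pos hb,
              Finset.sum_const, Finset.card_univ, Fintype.card_fin, nsmul_eq_mul]
            rw [ENNReal.ofReal_add (by positivity) (by positivity),
              ENNReal.ofReal_mul (by positivity), ENNReal.ofReal_mul (by positivity),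
              ENNReal.ofReal_natCast, ENNReal.ofReal_natCast]
        _ ≤ ENNReal.ofReal ε := ENNReal.ofReal_le_ofReal hsum

theorem Ico_zero_subset_iUnion_Icc {h : ℝ} (hh : 0 < h) (N : ℕ) :
    Ico 0 (N * h) ⊆ ⋃ j : Fin N, Icc (j * h) (j * h + h) := by
  rintro z ⟨hz0, hzN⟩
  have hq : 0 ≤ z / h := div_nonneg hz0 hh.le
  refine mem_iUnion.2 ⟨⟨⌊z / h⌋₊, (Nat.floor_lt hq).2 ((div_lt_iff₀ hh).2 hzN)⟩, ?_, ?_⟩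
  · exact (le_div_iff₀ hh).1 (Nat.floor_le hq)
  · rw [← add_one_mul]
    exact (div_le_iff₀ hh).1 (Nat.lt_floor_add_one _).le

theorem Fp_subset_points_union_Ico {p : ℝ} (hp : 0 < p) {M : ℕ} (hM : 0 < M) :
    Fp p ⊆ (⋃ k : Fin M, {((k : ℝ) + 1) ^ (-p)}) ∪ Ico 0 ((M : ℝ) ^ (-p)) := by
  have hMpos : (0 : ℝ) < M := Nat.cast_pos.2 hM
  rintro x (rfl | ⟨k, hk, rfl⟩)
  · exact Or.inr ⟨le_rfl, Real.rpow_pos_of_pos hMpos _⟩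
  by_cases hkM : k ≤ M
  · refine Or.inl (mem_iUnion.2 ⟨⟨k - 1, by omega⟩, ?_⟩)
    rw [mem_singleton_iff, Nat.cast_sub hk, Nat.cast_one, sub_add_cancel]
  · have hk' : (M : ℝ) < k := by exact_mod_cast not_le.1 hkM
    exact Or.inr ⟨(Real.rpow_pos_of_pos (hMpos.trans hk') _).le,
      Real.rpow_lt_rpow_of_neg hMpos hk' (neg_neg_of_pos hp)⟩

theorem icov_Fp {p θ δ : ℝ} (hp : 0 < p) (hθ : θ ≤ 1) (hδ0 : 0 < δ) (hδ1 : δ ≤ 1) (γ s : ℝ) :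
    ICov (Fp p) s δ (δ ^ θ)
      (δ ^ (s - γ) + δ ^ s + (δ ^ (γ * p - θ + θ * s) + δ ^ (θ * s))) := by
  have hδθ : 0 < δ ^ θ := Real.rpow_pos_of_pos hδ0 θ
  have hδγ : 0 < δ ^ (-γ) := Real.rpow_pos_of_pos hδ0 _
  set M := ⌈δ ^ (-γ)⌉₊
  have hM : 0 < M := Nat.ceil_pos.2 hδγ
  have hMpos : (0 : ℝ) < M := Nat.cast_pos.2 hM
  set N := ⌈(M : ℝ) ^ (-p) / δ ^ θ⌉₊
  have hMp : (M : ℝ) ^ (-p) ≤ δ ^ (γ * p) := by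
    calc (M : ℝ) ^ (-p) ≤ (δ ^ (-γ)) ^ (-p) :=
          Real.rpow_le_rpow_of_nonpos hδγ (Nat.le_ceil _) (by linarith)
      _ = δ ^ (γ * p) := by rw [← Real.rpow_mul hδ0.le, neg_mul_neg]
  have hM_le : (M : ℝ) ≤ δ ^ (-γ) + 1 := (Nat.ceil_lt_add_one hδγ.le).le
  have hN_le : (N : ℝ) ≤ δ ^ (γ * p - θ) + 1 := by
    refine (Nat.ceil_lt_add_one (by positivity)).le.trans (add_le_add_left ?_ 1)
    rw [Real.rpow_sub hδ0]
    exact div_le_div_of_nonneg_right hMp hδθ.le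
  have hcover : Fp p ⊆ (⋃ k : Fin M, Icc (((k : ℝ) + 1) ^ (-p)) (((k : ℝ) + 1) ^ (-p) + δ)) ∪
      ⋃ j : Fin N, Icc (j * δ ^ θ) (j * δ ^ θ + δ ^ θ) := by
    refine (Fp_subset_points_union_Ico hp hM).trans (union_subset_union ?_ ?_)
    · exact iUnion_mono fun k => singleton_subset_iff.2 ⟨le_rfl, by linarith⟩
    · refine (Ico_subset_Ico_right ?_).trans (Ico_zero_subset_iUnion_Icc hδθ N)
      exact (div_le_iff₀ hδθ).1 (Nat.le_ceil _)
  have hδ_le : δ ≤ δ ^ θ := by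
    simpa using Real.rpow_le_rpow_of_exponent_ge hδ0 hδ1 hθ
  refine icov_of_subset_two_scales _ _ hδ0 hδθ hcover le_rfl hδ_le hδ_le le_rfl ?_
  have hsplit_M : (δ ^ (-γ) + 1) * δ ^ s = δ ^ (s - γ) + δ ^ s := by
    rw [add_mul, one_mul, ← Real.rpow_add hδ0, neg_add_eq_sub]
  have hsplit_N : (δ ^ (γ * p - θ) + 1) * (δ ^ θ) ^ s =
      δ ^ (γ * p - θ + θ * s) + δ ^ (θ * s) := by
    rw [← Real.rpow_mul hδ0.le, add_mul, one_mul, ← Real.rpow_add hδ0]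
  rw [← hsplit_M, ← hsplit_N]
  gcongr

theorem tendsto_rpow_nhdsGT_zero {c : ℝ} (hc : 0 < c) :
    Tendsto (fun δ : ℝ => δ ^ c) (𝓝[>] 0) (𝓝[>] 0) := by
  refine tendsto_nhdsWithin_iff.2 ⟨tendsto_nhdsWithin_of_tendsto_nhds ?_, ?_⟩
  · simpa [Real.zero_rpow hc.ne'] using (Real.continuousAt_rpow_const 0 c (Or.inr hc.le)).tendsto
  · filter_upwards [self_mem_nhdsWithin] with δ hδ using Real.rpow_pos_of_pos hδ _

theorem eventually_icov_Fp {p θ s ε : ℝ} (hp : 0 < p) (hθ0 : 0 < θ) (hθ1 : θ ≤ 1)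
    (hs : θ / (p + θ) < s) (hε : 0 < ε) : ∀ᶠ δ in 𝓝[>] 0, ICov (Fp p) s δ (δ ^ θ) ε := by
  have hs0 : 0 < s := (div_pos hθ0 (by linarith)).trans hs
  set γ := (s + θ * (1 - s)) / (p + 1) with hγ
  have hexp : γ * p - θ + θ * s = s - γ := by rw [hγ]; field_simp; ring
  have hpos : 0 < s - γ := by
    have := (div_lt_iff₀ (by linarith : 0 < p + θ)).1 hs
    rw [sub_pos, div_lt_iff₀ (by linarith)]
    nlinarith
  have hlim : ∀ c : ℝ, 0 < c → Tendsto (fun δ : ℝ => δ ^ c) (𝓝[>] 0) (𝓝 0) := fun c hc =>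
    (tendsto_rpow_nhdsGT_zero hc).mono_right nhdsWithin_le_nhds
  have hsmall : Tendsto (fun δ : ℝ => δ ^ (s - γ) + δ ^ s + (δ ^ (s - γ) + δ ^ (θ * s)))
      (𝓝[>] 0) (𝓝 0) := by
    simpa using ((hlim _ hpos).add (hlim _ hs0)).add
      ((hlim _ hpos).add (hlim _ (mul_pos hθ0 hs0)))
  filter_upwards [hsmall.eventually (ge_mem_nhds hε), Ioc_mem_nhdsGT one_pos] with δ hδε hδ
  have := icov_Fp hp hθ1 hδ.1 hδ.2 γ s
  rw [hexp] at this
  exact this.mono hδε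

theorem eventually_icov_rpow_inv {X : Type} [PseudoEMetricSpace X] {F : Set X} {θ s ε : ℝ}
    (hθ : 0 < θ) (h : ∀ᶠ η in 𝓝[>] 0, ICov F s η (η ^ θ) ε) :
    ∀ᶠ δ in 𝓝[>] 0, ICov F s (δ ^ (1 / θ)) δ ε := by
  have hroot := tendsto_rpow_nhdsGT_zero (one_div_pos.2 hθ)
  filter_upwards [hroot.eventually h, self_mem_nhdsWithin] with δ hδ hδ0
  rwa [← Real.rpow_mul (le_of_lt hδ0), one_div_mul_cancel hθ.ne', Real.rpow_one] at hδ

theorem upperIDim_le_of_eventually {X : Type} [PseudoEMetricSpace X] {F : Set X} {θ d : ℝ}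
    (hθ : θ ≠ 0) (hd : 0 ≤ d)
    (h : ∀ s, d < s → ∀ ε > 0, ∀ᶠ δ in 𝓝[>] 0, ICov F s (δ ^ (1 / θ)) δ ε) :
    upperIDim F θ ≤ d := by
  rw [upperIDim, if_neg hθ]
  refine le_of_forall_gt_imp_ge_of_dense fun s hs => csInf_le ⟨0, fun _ hx => hx.1⟩ ?_
  refine ⟨hd.trans hs.le, fun ε hε => ?_⟩
  obtain ⟨δ₀, hδ₀, hsub⟩ := mem_nhdsGT_iff_exists_Ioc_subset.1 (h s hs ε hε)
  exact ⟨δ₀, hδ₀, fun δ hδ hδle => hsub ⟨hδ, hδle⟩⟩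

theorem stmt16 (p : ℝ) (hp : 0 < p) (θ : ℝ) (hθ : θ ∈ Set.Ioc (0:ℝ) 1) :
    (∀ s : ℝ, θ / (p + θ) < s → ∀ ε > (0:ℝ), ∀ δ₀ > (0:ℝ), ∃ δ : ℝ, 0 < δ ∧ δ ≤ δ₀ ∧
      ICov (Fp p) s δ (δ ^ θ) ε) ∧
    upperIDim (Fp p) θ ≤ θ / (p + θ) := by
  obtain ⟨hθ0, hθ1⟩ := hθ
  refine ⟨fun s hs ε hε δ₀ hδ₀ => ?_, ?_⟩
  · obtain ⟨δ, hcov, hδ, hδle⟩ :=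
      ((eventually_icov_Fp hp hθ0 hθ1 hs hε).and (Ioc_mem_nhdsGT (gt_iff_lt.1 hδ₀))).exists
    exact ⟨δ, hδ, hδle, hcov⟩
  · refine upperIDim_le_of_eventually hθ0.ne' (div_pos hθ0 (by linarith)).le
      fun s hs ε hε => ?_
    exact eventually_icov_rpow_inv hθ0 (eventually_icov_Fp hp hθ0 hθ1 hs hε)
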